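/- arXiv:1312.7257 — 3 statements merged into one kernel-verified Lean document; each statement's English description precedes it below -/
import Mathlib

section
/- Let I be an open interval, 𝔰 : I → (0, ∞) continuous, c ∈ I, and (ℓ̃(c), r̃(c)) the image of I under H_c(x) = ∫_c^x dz/𝔰(z). If ϑ : (ℓ̃(c), r̃(c)) → I is any continuous function satisfying ϑ(w) = c + ∫_0^w 𝔰(ϑ(ζ)) dζ for all w in its domain, then ϑ = Θ_c, i.e., the integral equation ϑ(w) = c + ∫_0^w 𝔰(ϑ(ζ)) dζ has at most one solution, namely the inverse Θ_c of H_c. -/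
open Set MeasureTheory Filter

/-! `H_c` has derivative `1/𝔰` and a solution `ϑ` has derivative `𝔰 ∘ ϑ`, so `H_c ∘ ϑ` has
derivative `1` on `H_c '' I`, which is an open interval: connected as a continuous image of `I`,
open because `H_c` has a nonvanishing strict derivative. As `H_c (ϑ 0) = H_c c = 0`, we get
`H_c ∘ ϑ = id` there, and applying `Θ_c` gives `ϑ = Θ_c`. -/

theorem IsOpen.image_of_hasStrictDerivAt {𝕜 : Type*} [NontriviallyNormedField 𝕜]
    [CompleteSpace 𝕜] {f f' : 𝕜 → 𝕜} {U : Set 𝕜} (hU : IsOpen U)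
    (hf : ∀ x ∈ U, HasStrictDerivAt f (f' x) x) (hf' : ∀ x ∈ U, f' x ≠ 0) :
    IsOpen (f '' U) := by
  rw [isOpen_iff_mem_nhds]
  rintro _ ⟨x, hx, rfl⟩
  rw [← (hf x hx).map_nhds_eq (hf' x hx)]
  exact image_mem_map (hU.mem_nhds hx)

section IntegralOnOpenInterval

variable {E : Type*} [NormedAddCommGroup E] [NormedSpace ℝ E] [CompleteSpace E]
  {U : Set ℝ} {f : ℝ → E} {a : ℝ}

theorem ContinuousOn.integral_hasStrictDerivAt_of_ordConnected (hU : IsOpen U)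
    (hU' : U.OrdConnected) (hf : ContinuousOn f U) (ha : a ∈ U) {x : ℝ} (hx : x ∈ U) :
    HasStrictDerivAt (fun u => ∫ z in a..u, f z) (f x) x :=
  intervalIntegral.integral_hasStrictDerivAt_right
    ((hf.mono (hU'.uIcc_subset ha hx)).intervalIntegrable)
    (hf.stronglyMeasurableAtFilter hU x hx) (hf.continuousAt (hU.mem_nhds hx))

theorem hasDerivAt_of_eqOn_add_integral (hU : IsOpen U) (hU' : U.OrdConnected)
    (hf : ContinuousOn f U) (ha : a ∈ U) {g : ℝ → E} {c : E}
    (hg : ∀ w ∈ U, g w = c + ∫ z in a..w, f z) {x : ℝ} (hx : x ∈ U) :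
    HasDerivAt g (f x) x := by
  refine ((hf.integral_hasStrictDerivAt_of_ordConnected hU hU' ha hx).hasDerivAt.const_add c)
    |>.congr_of_eventuallyEq ?_
  filter_upwards [hU.mem_nhds hx] with u hu using hg u hu

end IntegralOnOpenInterval

theorem stmt6_general (ℓ r : ℝ) (s : ℝ → ℝ)
    (hscont : ContinuousOn s (Ioo ℓ r))
    (hpos : ∀ x ∈ Ioo ℓ r, 0 < s x)
    (c : ℝ) (hc : c ∈ Ioo ℓ r)
    (H : ℝ → ℝ) (hH : ∀ x : ℝ, H x = ∫ z in c..x, (s z)⁻¹)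
    (Θ : ℝ → ℝ)
    (hΘleft : ∀ x ∈ Ioo ℓ r, Θ (H x) = x)
    (ϑ : ℝ → ℝ)
    (hϑcont : ContinuousOn ϑ (H '' Ioo ℓ r))
    (hϑmem : ∀ w ∈ H '' Ioo ℓ r, ϑ w ∈ Ioo ℓ r)
    (hϑeq : ∀ w ∈ H '' Ioo ℓ r, ϑ w = c + ∫ ζ in (0:ℝ)..w, s (ϑ ζ)) :
    ∀ w ∈ H '' Ioo ℓ r, ϑ w = Θ w := by
  set S := H '' Ioo ℓ r
  have hH' : ∀ x ∈ Ioo ℓ r, HasStrictDerivAt H (s x)⁻¹ x := fun x hx => funext hH ▸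
    (hscont.inv₀ fun y hy => (hpos y hy).ne').integral_hasStrictDerivAt_of_ordConnected
      isOpen_Ioo ordConnected_Ioo hc hx
  have hSopen : IsOpen S := isOpen_Ioo.image_of_hasStrictDerivAt hH'
    fun x hx => (inv_pos.2 (hpos x hx)).ne'
  have hSconn : IsPreconnected S := isPreconnected_Ioo.image H
    fun x hx => (hH' x hx).hasDerivAt.continuousAt.continuousWithinAt
  have h0S : (0 : ℝ) ∈ S := ⟨c, hc, by rw [hH, intervalIntegral.integral_same]⟩
  have hϑ' : ∀ w ∈ S, HasDerivAt ϑ (s (ϑ w)) w := fun w hw =>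
    hasDerivAt_of_eqOn_add_integral hSopen hSconn.ordConnected (hscont.comp hϑcont hϑmem) h0S
      hϑeq hw
  have hHϑ' : ∀ w ∈ S, HasDerivAt (H ∘ ϑ) 1 w := fun w hw => by
    simpa [inv_mul_cancel₀ (hpos _ (hϑmem w hw)).ne'] using
      (hH' _ (hϑmem w hw)).hasDerivAt.comp w (hϑ' w hw)
  have hHϑ : EqOn (H ∘ ϑ) id S := by
    refine hSopen.eqOn_of_deriv_eq hSconn
      (fun w hw => (hHϑ' w hw).differentiableAt.differentiableWithinAt) differentiableOn_id
      (fun w hw => by simp [(hHϑ' w hw).deriv]) h0S ?_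
    simp [hϑeq 0 h0S, hH]
  intro w hw
  rw [← hΘleft _ (hϑmem w hw)]
  exact congrArg Θ (hHϑ hw)

/-- Uniqueness for the ordinary integral equation `ϑ(w) = c + ∫_0^w 𝔰(ϑ(ζ)) dζ`:
any continuous solution with values in `(ℓ, r)`, defined on the domain
`H_c '' (ℓ, r)`, coincides with the inverse `Θ_c` of `H_c(x) = ∫_c^x dz/𝔰(z)`. -/
theorem stmt6 (ℓ r : ℝ) (hlr : ℓ < r) (s : ℝ → ℝ)
    (hscont : ContinuousOn s (Ioo ℓ r))
    (hpos : ∀ x ∈ Ioo ℓ r, 0 < s x)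
    (c : ℝ) (hc : c ∈ Ioo ℓ r)
    (H : ℝ → ℝ) (hH : ∀ x : ℝ, H x = ∫ z in c..x, (s z)⁻¹)
    (Θ : ℝ → ℝ)
    (hΘmem : ∀ w ∈ H '' Ioo ℓ r, Θ w ∈ Ioo ℓ r)
    (hΘleft : ∀ x ∈ Ioo ℓ r, Θ (H x) = x)
    (hΘright : ∀ w ∈ H '' Ioo ℓ r, H (Θ w) = w)
    (ϑ : ℝ → ℝ)
    (hϑcont : ContinuousOn ϑ (H '' Ioo ℓ r))
    (hϑmem : ∀ w ∈ H '' Ioo ℓ r, ϑ w ∈ Ioo ℓ r)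
    (hϑeq : ∀ w ∈ H '' Ioo ℓ r, ϑ w = c + ∫ ζ in (0:ℝ)..w, s (ϑ ζ)) :
    ∀ w ∈ H '' Ioo ℓ r, ϑ w = Θ w :=
  stmt6_general ℓ r s hscont hpos c hc H hH Θ hΘleft ϑ hϑcont hϑmem hϑeq
end

section
/- Let A : ℝ → (0, ∞) be continuous with ∫_{-∞}^0 dz/A(z) = ∞ and ∫_0^∞ dz/A(z) = ∞, and let B : [0, ∞) → ℝ be continuous, of finite variation on compact intervals, with B(0) = 0. Define 𝚯₀ : ℝ → ℝ as the inverse of 𝐇₀(x) = ∫_0^x dz/A(z). Then Γ(t) := 𝚯₀(B(t)) is a solution of the Stieltjes integral equation Γ(t) = ∫_0^t A(Γ(s)) dB(s) for all t ≥ 0, and it is the unique continuous finite-variation solution of this equation. -/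
/-!
Both halves are instances of one chain rule for Stieltjes integrals: if `C` is continuous with
`C t - C 0 = (νp - νn)(0, t]` and `f` is `C¹`, then
`f (C t) - f (C 0) = ∫_(0,t] f' (C u) d(νp - νn)(u)`.
On each piece `[a, b]` of a fine partition of `[0, t]` both sides are within
`ε · (νp + νn)(a, b]` of `f' (C a) · (C b - C a)`, by uniform continuity of `f' ∘ C`, and the
errors add up to `ε · (νp + νn)(0, t]`.

With `f = 𝚯₀`, whose derivative is `A ∘ 𝚯₀`, and `C = B` this gives the existence. For a
solution `Γ`, the measures `A (Γ u) dμp(u)` and `A (Γ u) dμn(u)` represent `dΓ`, and the chain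
rule with `f = 𝐇₀`, `f' = 1 / A`, `C = Γ` gives `𝐇₀ (Γ t) = B t`, i.e. `Γ t = 𝚯₀ (B t)`.
-/

open Set MeasureTheory Filter Topology

lemma abs_sub_le_mul_sub_of_forall_near {F M : ℝ → ℝ} {s t ε δ : ℝ} (hst : s ≤ t) (hδ : 0 < δ)
    (hnear : ∀ a b, s ≤ a → a ≤ b → b ≤ t → b - a < δ → |F b - F a| ≤ ε * (M b - M a)) :
    |F t - F s| ≤ ε * (M t - M s) := by
  obtain ⟨n, hn⟩ := exists_nat_gt ((t - s) / δ)
  have hn0 : (0 : ℝ) < n := (div_nonneg (sub_nonneg.2 hst) hδ.le).trans_lt hn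
  set h := (t - s) / n with h_def
  have hh : 0 ≤ h := div_nonneg (sub_nonneg.2 hst) hn0.le
  have hhδ : h < δ := by rw [div_lt_iff₀ hδ] at hn; rwa [div_lt_iff₀ hn0, mul_comm]
  set x : ℕ → ℝ := fun i => s + i * h
  have hx0 : x 0 = s := by simp [x]
  have hxn : x n = t := by simp only [x, h_def]; field_simp; ring
  have hstep : ∀ i ∈ Finset.range n,
      |F (x (i + 1)) - F (x i)| ≤ ε * (M (x (i + 1)) - M (x i)) := by
    intro i hi
    have hi : (i : ℝ) + 1 ≤ n := by exact_mod_cast Finset.mem_range.1 hi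
    refine hnear _ _ ?_ ?_ ?_ ?_ <;> simp only [x, Nat.cast_add, Nat.cast_one]
    · nlinarith
    · nlinarith
    · nlinarith [mul_div_cancel₀ (t - s) hn0.ne']
    · linarith
  calc |F t - F s| = |∑ i ∈ Finset.range n, (F (x (i + 1)) - F (x i))| := by
        rw [Finset.sum_range_sub (fun i => F (x i)), hx0, hxn]
    _ ≤ ∑ i ∈ Finset.range n, |F (x (i + 1)) - F (x i)| := Finset.abs_sum_le_sum_abs _ _
    _ ≤ ∑ i ∈ Finset.range n, ε * (M (x (i + 1)) - M (x i)) := Finset.sum_le_sum hstep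
    _ = ε * (M t - M s) := by
        rw [← Finset.mul_sum, Finset.sum_range_sub (fun i => M (x i)), hx0, hxn]

lemma eq_of_forall_abs_sub_le_mul_sub {F M : ℝ → ℝ} {s t : ℝ} (hst : s ≤ t)
    (h : ∀ ε > 0, ∃ δ > 0, ∀ a b, s ≤ a → a ≤ b → b ≤ t → b - a < δ →
      |F b - F a| ≤ ε * (M b - M a)) :
    F t = F s := by
  have hbound : ∀ ε > 0, |F t - F s| ≤ ε * (M t - M s) := fun ε hε =>
    let ⟨_, hδ, hnear⟩ := h ε hε
    abs_sub_le_mul_sub_of_forall_near hst hδ hnear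
  have hlim : Tendsto (fun ε => ε * (M t - M s)) (𝓝[>] 0) (𝓝 0) :=
    tendsto_nhdsWithin_of_tendsto_nhds ((continuous_mul_const _).tendsto' 0 0 (zero_mul _))
  have := ge_of_tendsto hlim (eventually_nhdsWithin_of_forall hbound)
  exact sub_eq_zero.1 (abs_nonpos_iff.1 this)

section StieltjesChainRule

lemma abs_sub_sub_mul_le_of_abs_deriv_sub_le {f f' : ℝ → ℝ} {x y c ε : ℝ}
    (hf : ∀ z ∈ uIcc x y, HasDerivAt f (f' z) z) (hbound : ∀ z ∈ uIcc x y, |f' z - c| ≤ ε) :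
    |f y - f x - c * (y - x)| ≤ ε * |y - x| := by
  have hderiv : ∀ z ∈ uIcc x y,
      HasDerivWithinAt (fun z => f z - c * z) (f' z - c) (uIcc x y) z := fun z hz =>
    (((hf z hz).sub ((hasDerivAt_id z).const_mul c)).congr_deriv (by ring)).hasDerivWithinAt
  have := convex_uIcc x y |>.norm_image_sub_le_of_norm_hasDerivWithin_le hderiv hbound
    left_mem_uIcc right_mem_uIcc
  simp only [Real.norm_eq_abs] at this
  convert this using 2
  ring

lemma abs_setIntegral_sub_mul_le {X : Type*} [MeasurableSpace X] {μ : Measure X} {s : Set X}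
    {g : X → ℝ} {c ε : ℝ} (hs : μ s < ⊤) (hg : IntegrableOn g s μ)
    (hbound : ∀ x ∈ s, |g x - c| ≤ ε) :
    |∫ x in s, g x ∂μ - c * μ.real s| ≤ ε * μ.real s := by
  have hsplit : ∫ x in s, g x ∂μ - c * μ.real s = ∫ x in s, (g x - c) ∂μ := by
    rw [integral_sub hg (integrableOn_const hs.ne), setIntegral_const, smul_eq_mul, mul_comm]
  rw [hsplit]
  exact norm_setIntegral_le_of_norm_le_const hs fun x hx =>
    (Real.norm_eq_abs _).trans_le (hbound x hx)

lemma measureReal_Ioc_add_Ioc {μ : Measure ℝ} [IsLocallyFiniteMeasure μ] {a b c : ℝ} (hab : a ≤ b)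
    (hbc : b ≤ c) : μ.real (Ioc a b) + μ.real (Ioc b c) = μ.real (Ioc a c) := by
  rw [← Ioc_union_Ioc_eq_Ioc hab hbc,
    measureReal_union (Ioc_disjoint_Ioc_of_le le_rfl) measurableSet_Ioc
      measure_Ioc_lt_top.ne measure_Ioc_lt_top.ne]

variable {νp νn : Measure ℝ} [IsLocallyFiniteMeasure νp] [IsLocallyFiniteMeasure νn]

lemma abs_sub_sub_stieltjes_le {f f' C : ℝ → ℝ} {a b c ε : ℝ} (hab : a ≤ b)
    (hf : ∀ x, HasDerivAt f (f' x) x) (hf' : Continuous f') (hC : ContinuousOn C (Icc a b))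
    (hν : νp.real (Ioc a b) - νn.real (Ioc a b) = C b - C a)
    (hbound : ∀ u ∈ Icc a b, |f' (C u) - c| ≤ ε) :
    |f (C b) - f (C a) - ((∫ u in Ioc a b, f' (C u) ∂νp) - ∫ u in Ioc a b, f' (C u) ∂νn)| ≤
      2 * ε * (νp.real (Ioc a b) + νn.real (Ioc a b)) := by
  set p := νp.real (Ioc a b)
  set q := νn.real (Ioc a b)
  have hε : 0 ≤ ε := (abs_nonneg _).trans (hbound a (left_mem_Icc.2 hab))
  have hint : ∀ (ν : Measure ℝ) [IsLocallyFiniteMeasure ν],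
      IntegrableOn (fun u => f' (C u)) (Ioc a b) ν := fun ν _ =>
    (hf'.comp_continuousOn hC).integrableOn_Icc.mono_set Ioc_subset_Icc_self
  have hf'C : ∀ z ∈ uIcc (C a) (C b), |f' z - c| ≤ ε := by
    intro z hz
    obtain ⟨u, hu, rfl⟩ := intermediate_value_uIcc (by rwa [uIcc_of_le hab]) hz
    exact hbound u (by rwa [uIcc_of_le hab] at hu)
  have hf_inc := abs_sub_sub_mul_le_of_abs_deriv_sub_le (fun z _ => hf z) hf'C
  have hp := abs_setIntegral_sub_mul_le measure_Ioc_lt_top (hint νp)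
    fun u hu => hbound u (Ioc_subset_Icc_self hu)
  have hq := abs_setIntegral_sub_mul_le measure_Ioc_lt_top (hint νn)
    fun u hu => hbound u (Ioc_subset_Icc_self hu)
  have hpq : |C b - C a| ≤ p + q := by
    rw [← hν]
    exact (abs_sub _ _).trans_eq
      (by rw [abs_of_nonneg measureReal_nonneg, abs_of_nonneg measureReal_nonneg])
  calc _ = |(f (C b) - f (C a) - c * (C b - C a)) - ((∫ u in Ioc a b, f' (C u) ∂νp) - c * p)
          + ((∫ u in Ioc a b, f' (C u) ∂νn) - c * q)| := by rw [← hν]; congr 1; ring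
    _ ≤ ε * |C b - C a| + ε * p + ε * q :=
        (abs_add_le _ _).trans (add_le_add ((abs_sub _ _).trans (add_le_add hf_inc hp)) hq)
    _ ≤ 2 * ε * (p + q) := by nlinarith

theorem stieltjes_chain_rule {f f' C : ℝ → ℝ} (hf : ∀ x, HasDerivAt f (f' x) x)
    (hf' : Continuous f') (hC : Continuous C)
    (hν : ∀ t, 0 ≤ t → νp.real (Ioc 0 t) - νn.real (Ioc 0 t) = C t - C 0) {t : ℝ} (ht : 0 ≤ t) :
    f (C t) - f (C 0) =
      (∫ u in Ioc 0 t, f' (C u) ∂νp) - ∫ u in Ioc 0 t, f' (C u) ∂νn := by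
  have hg : Continuous fun u => f' (C u) := hf'.comp hC
  set F : ℝ → ℝ := fun x =>
    f (C x) - ((∫ u in (0)..x, f' (C u) ∂νp) - ∫ u in (0)..x, f' (C u) ∂νn)
  set M : ℝ → ℝ := fun x => νp.real (Ioc 0 x) + νn.real (Ioc 0 x)
  have hF_inc : ∀ a b, a ≤ b → F b - F a = f (C b) - f (C a) -
      ((∫ u in Ioc a b, f' (C u) ∂νp) - ∫ u in Ioc a b, f' (C u) ∂νn) := by
    intro a b hab
    have hp := intervalIntegral.integral_interval_sub_left (hg.intervalIntegrable (μ := νp) 0 b)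
      (hg.intervalIntegrable 0 a)
    have hn := intervalIntegral.integral_interval_sub_left (hg.intervalIntegrable (μ := νn) 0 b)
      (hg.intervalIntegrable 0 a)
    rw [intervalIntegral.integral_of_le hab] at hp hn
    simp only [F]
    linarith
  have hconst : F t = F 0 := eq_of_forall_abs_sub_le_mul_sub (M := M) ht fun ε hε => by
    obtain ⟨δ, hδ, hclose⟩ := Metric.uniformContinuousOn_iff.1
      (isCompact_Icc.uniformContinuousOn_of_continuous hg.continuousOn) (ε / 2) (half_pos hε)
    refine ⟨δ, hδ, fun a b ha hab hbt hba => ?_⟩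
    have hp := measureReal_Ioc_add_Ioc (μ := νp) ha hab
    have hn := measureReal_Ioc_add_Ioc (μ := νn) ha hab
    have hν_inc : νp.real (Ioc a b) - νn.real (Ioc a b) = C b - C a := by
      linarith [hν a ha, hν b (ha.trans hab)]
    have hbound : ∀ u ∈ Icc a b, |f' (C u) - f' (C a)| ≤ ε / 2 := fun u hu =>
      (hclose u ⟨ha.trans hu.1, hu.2.trans hbt⟩ a ⟨ha, hab.trans hbt⟩
        (by rw [Real.dist_eq, abs_of_nonneg (sub_nonneg.2 hu.1)]; linarith [hu.2])).le
    have := abs_sub_sub_stieltjes_le hab hf hf' hC.continuousOn hν_inc hbound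
    rw [hF_inc a b hab]
    simp only [M]
    convert this using 1
    rw [← hp, ← hn]
    ring
  simpa [F, intervalIntegral.integral_of_le ht, sub_eq_iff_eq_add, add_comm] using hconst

end StieltjesChainRule

lemma setIntegral_withDensity_ofReal {X : Type*} [MeasurableSpace X] {μ : Measure X} {w : X → ℝ}
    (hw : Measurable w) (hw0 : ∀ x, 0 ≤ w x) {s : Set X} (hs : MeasurableSet s) (g : X → ℝ) :
    ∫ x in s, g x ∂μ.withDensity (fun x => ENNReal.ofReal (w x)) = ∫ x in s, w x * g x ∂μ := by
  rw [setIntegral_withDensity_eq_setIntegral_toReal_smul hw.ennreal_ofReal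
    (ae_of_all _ fun _ => ENNReal.ofReal_lt_top) g hs]
  simp_rw [ENNReal.toReal_ofReal (hw0 _), smul_eq_mul]

lemma measureReal_withDensity_ofReal {X : Type*} [MeasurableSpace X] {μ : Measure X} {w : X → ℝ}
    (hw : Measurable w) (hw0 : ∀ x, 0 ≤ w x) {s : Set X} (hs : MeasurableSet s) :
    (μ.withDensity fun x => ENNReal.ofReal (w x)).real s = ∫ x in s, w x ∂μ := by
  simpa using setIntegral_withDensity_ofReal (μ := μ) hw hw0 hs fun _ => 1

section Lamperti

variable {A : ℝ → ℝ} (hA : Continuous A) (hApos : ∀ x, 0 < A x)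
include hA hApos

lemma hasDerivAt_integral_inv (x : ℝ) :
    HasDerivAt (fun x => ∫ z in (0 : ℝ)..x, (A z)⁻¹) (A x)⁻¹ x :=
  ((hA.inv₀ fun x => (hApos x).ne').integral_hasStrictDerivAt 0 x).hasDerivAt

lemma strictMono_integral_inv : StrictMono fun x => ∫ z in (0 : ℝ)..x, (A z)⁻¹ :=
  strictMono_of_hasDerivAt_pos (hasDerivAt_integral_inv hA hApos) fun x => inv_pos.2 (hApos x)

variable {Θ : ℝ → ℝ} (hΘleft : ∀ x, Θ (∫ z in (0 : ℝ)..x, (A z)⁻¹) = x)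
  (hΘright : ∀ y, (∫ z in (0 : ℝ)..(Θ y), (A z)⁻¹) = y)

include hΘright in
lemma lamperti_inverse_monotone : Monotone Θ := fun y₁ y₂ h =>
  (strictMono_integral_inv hA hApos).le_iff_le.1 (by simpa only [hΘright] using h)

include hΘleft hΘright in
lemma lamperti_inverse_continuous : Continuous Θ :=
  (lamperti_inverse_monotone hA hApos hΘright).continuous_of_surjective fun x => ⟨_, hΘleft x⟩

include hΘleft hΘright in
lemma hasDerivAt_lamperti_inverse (y : ℝ) : HasDerivAt Θ (A (Θ y)) y := by
  simpa using (hasDerivAt_integral_inv hA hApos (Θ y)).of_local_left_inverse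
    (lamperti_inverse_continuous hA hApos hΘleft hΘright).continuousAt
    (inv_ne_zero (hApos (Θ y)).ne') (Eventually.of_forall hΘright)

variable {B : ℝ → ℝ} {μp μn : Measure ℝ} [IsLocallyFiniteMeasure μp] [IsLocallyFiniteMeasure μn]

lemma integral_inv_comp_eq_of_solution
    (hμ : ∀ t, 0 ≤ t → μp.real (Ioc 0 t) - μn.real (Ioc 0 t) = B t - B 0)
    {Γ : ℝ → ℝ} (hΓ : Continuous Γ)
    (hΓeq : ∀ t, 0 ≤ t →
      Γ t = (∫ u in Ioc 0 t, A (Γ u) ∂μp) - ∫ u in Ioc 0 t, A (Γ u) ∂μn) {t : ℝ} (ht : 0 ≤ t) :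
    ∫ z in (0 : ℝ)..(Γ t), (A z)⁻¹ = B t - B 0 := by
  have hw : Continuous fun u => A (Γ u) := hA.comp hΓ
  have hw0 : ∀ u, 0 ≤ A (Γ u) := fun u => (hApos (Γ u)).le
  have := IsLocallyFiniteMeasure.withDensity_ofReal (μ := μp) hw
  have := IsLocallyFiniteMeasure.withDensity_ofReal (μ := μn) hw
  have hΓ0 : Γ 0 = 0 := by simpa using hΓeq 0 le_rfl
  have hν : ∀ t, 0 ≤ t →
      (μp.withDensity fun u => ENNReal.ofReal (A (Γ u))).real (Ioc 0 t) -
        (μn.withDensity fun u => ENNReal.ofReal (A (Γ u))).real (Ioc 0 t) = Γ t - Γ 0 := by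
    intro t ht
    rw [measureReal_withDensity_ofReal hw.measurable hw0 measurableSet_Ioc,
      measureReal_withDensity_ofReal hw.measurable hw0 measurableSet_Ioc, hΓ0, sub_zero, hΓeq t ht]
  have hchain := stieltjes_chain_rule (hasDerivAt_integral_inv hA hApos)
    (hA.inv₀ fun x => (hApos x).ne') hΓ hν ht
  simp_rw [setIntegral_withDensity_ofReal hw.measurable hw0 measurableSet_Ioc,
    mul_inv_cancel₀ (hApos _).ne', setIntegral_const, smul_eq_mul, mul_one, hΓ0,
    intervalIntegral.integral_same, sub_zero] at hchain
  rw [hchain, hμ t ht]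

end Lamperti

theorem stmt10_general (A : ℝ → ℝ) (hA : Continuous A) (hApos : ∀ x : ℝ, 0 < A x)
    (Θ : ℝ → ℝ)
    (hΘleft : ∀ x : ℝ, Θ (∫ z in (0:ℝ)..x, (A z)⁻¹) = x)
    (hΘright : ∀ y : ℝ, (∫ z in (0:ℝ)..(Θ y), (A z)⁻¹) = y)
    (B : ℝ → ℝ) (hBcont : Continuous B) (hB0 : B 0 = 0)
    (μp μn : Measure ℝ)
    [IsLocallyFiniteMeasure μp] [IsLocallyFiniteMeasure μn]
    (hμ : ∀ a b : ℝ, a ≤ b →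
      (μp (Ioc a b)).toReal - (μn (Ioc a b)).toReal = B b - B a) :
    (∀ t : ℝ, 0 ≤ t →
      Θ (B t) = (∫ u in Ioc (0:ℝ) t, A (Θ (B u)) ∂μp) -
        ∫ u in Ioc (0:ℝ) t, A (Θ (B u)) ∂μn) ∧
    (∀ Γ : ℝ → ℝ, Continuous Γ → (∀ T : ℝ, BoundedVariationOn Γ (Icc 0 T)) →
      (∀ t : ℝ, 0 ≤ t →
        Γ t = (∫ u in Ioc (0:ℝ) t, A (Γ u) ∂μp) - ∫ u in Ioc (0:ℝ) t, A (Γ u) ∂μn) →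
      ∀ t : ℝ, 0 ≤ t → Γ t = Θ (B t)) := by
  have hμ₀ : ∀ t, 0 ≤ t → μp.real (Ioc 0 t) - μn.real (Ioc 0 t) = B t - B 0 := hμ 0
  refine ⟨fun t ht => ?_, fun Γ hΓ _ hΓeq t ht => ?_⟩
  · have hΘ0 : Θ 0 = 0 := by simpa using hΘleft 0
    have := stieltjes_chain_rule (hasDerivAt_lamperti_inverse hA hApos hΘleft hΘright)
      (hA.comp (lamperti_inverse_continuous hA hApos hΘleft hΘright)) hBcont hμ₀ ht
    rwa [hB0, hΘ0, sub_zero] at this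
  · have := integral_inv_comp_eq_of_solution hA hApos hμ₀ hΓ hΓeq ht
    rw [hB0, sub_zero] at this
    rw [← this, hΘleft]

/-- Lamperti solution of the Stieltjes integral equation `Γ(t) = ∫_0^t A(Γ(s)) dB(s)`:
under the Barrow–Osgood conditions `∫_{-∞}^0 dz/A = ∫_0^∞ dz/A = ∞`, with `𝚯₀` the
global inverse of `𝐇₀(x) = ∫_0^x dz/A(z)` and `dB` represented by the difference of
the locally finite measures `μp`, `μn`, the function `Γ(t) = 𝚯₀(B(t))` solves the
equation for all `t ≥ 0`, and it is the unique continuous finite-variation solution. -/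
theorem stmt10 (A : ℝ → ℝ) (hA : Continuous A) (hApos : ∀ x : ℝ, 0 < A x)
    (hBO₁ : Tendsto (fun x => ∫ z in x..(0:ℝ), (A z)⁻¹) atBot atTop)
    (hBO₂ : Tendsto (fun x => ∫ z in (0:ℝ)..x, (A z)⁻¹) atTop atTop)
    (Θ : ℝ → ℝ)
    (hΘleft : ∀ x : ℝ, Θ (∫ z in (0:ℝ)..x, (A z)⁻¹) = x)
    (hΘright : ∀ y : ℝ, (∫ z in (0:ℝ)..(Θ y), (A z)⁻¹) = y)
    (B : ℝ → ℝ) (hBcont : Continuous B) (hB0 : B 0 = 0)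
    (hBV : ∀ T : ℝ, BoundedVariationOn B (Icc 0 T))
    (μp μn : Measure ℝ)
    [IsLocallyFiniteMeasure μp] [IsLocallyFiniteMeasure μn]
    (hμ : ∀ a b : ℝ, a ≤ b →
      (μp (Ioc a b)).toReal - (μn (Ioc a b)).toReal = B b - B a) :
    (∀ t : ℝ, 0 ≤ t →
      Θ (B t) = (∫ u in Ioc (0:ℝ) t, A (Θ (B u)) ∂μp) -
        ∫ u in Ioc (0:ℝ) t, A (Θ (B u)) ∂μn) ∧
    (∀ Γ : ℝ → ℝ, Continuous Γ → (∀ T : ℝ, BoundedVariationOn Γ (Icc 0 T)) →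
      (∀ t : ℝ, 0 ≤ t →
        Γ t = (∫ u in Ioc (0:ℝ) t, A (Γ u) ∂μp) - ∫ u in Ioc (0:ℝ) t, A (Γ u) ∂μn) →
      ∀ t : ℝ, 0 ≤ t → Γ t = Θ (B t)) :=
  stmt10_general A hA hApos Θ hΘleft hΘright B hBcont hB0 μp μn hμ
end

section
/- Lower semicontinuity of exit times under uniform convergence: let I = (ℓ, r), fix strictly monotone sequences ℓ_n ↓ ℓ and r_n ↑ r with ℓ < ℓ_{n+1} < ℓ_n < r_n < r_{n+1} < r, and for a continuous path x : [0, ∞) → I define S_n(x) = inf{t ≥ 0 : x(t) ∉ (ℓ_n, r_n)} and S(x) = lim_n S_n(x). If continuous paths x_k converge to x uniformly on compact subsets of [0, ∞), then S(x) ≤ liminf_{k → ∞} S(x_k). -/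
/-!
For a fixed window `(a, b)`, `S_{a,b}(x) > t` forces `x` to map the compact interval `[0, t]` into
the open set `(a, b)`, and conversely such a path has `S_{a,b}(x) ≥ t`. Mapping `[0, t]` into
`(a, b)` survives uniform perturbations on `[0, t]` that are small compared with the distance from
`x([0, t])` to the complement of `(a, b)`. Hence each `S_n` is lower semicontinuous under locally
uniform convergence, and so is their supremum `S`.
-/

open Set Filter Topology

/-- The exit time `S_n(x) = inf { t ≥ 0 : x(t) ∉ (a, b) }`, valued in `[0, ∞]`
(the infimum of the empty set being `∞`). -/
noncomputable def exitTime (a b : ℝ) (x : ℝ → ℝ) : ENNReal :=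
  sInf (ENNReal.ofReal '' {t : ℝ | 0 ≤ t ∧ x t ∉ Set.Ioo a b})

theorem TendstoUniformlyOn.eventually_mapsTo {α β ι : Type*} [TopologicalSpace α]
    [UniformSpace β] {F : ι → α → β} {f : α → β} {p : Filter ι} {K : Set α} {U : Set β}
    (h : TendstoUniformlyOn F f p K) (hK : IsCompact K) (hf : ContinuousOn f K)
    (hU : IsOpen U) (hfKU : MapsTo f K U) : ∀ᶠ n in p, MapsTo (F n) K U := by
  obtain ⟨V, hV, -, hVU⟩ :=
    lebesgue_number_of_compact_open (hK.image_of_continuousOn hf) hU hfKU.image_subset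
  filter_upwards [h V hV] with n hn s hs
  exact hVU (f s) (mem_image_of_mem f hs) (hn s hs)

section exitTime

variable {a b t : ℝ} {x : ℝ → ℝ}

theorem mapsTo_Icc_of_ofReal_lt_exitTime (ht : ENNReal.ofReal t < exitTime a b x) :
    MapsTo x (Icc 0 t) (Ioo a b) := by
  intro s hs
  by_contra hout
  have hle : exitTime a b x ≤ ENNReal.ofReal s := sInf_le ⟨s, ⟨hs.1, hout⟩, rfl⟩
  exact (hle.trans (ENNReal.ofReal_le_ofReal hs.2)).not_gt ht

theorem ofReal_le_exitTime_of_mapsTo_Icc (hx : MapsTo x (Icc 0 t) (Ioo a b)) :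
    ENNReal.ofReal t ≤ exitTime a b x := by
  refine le_sInf ?_
  rintro _ ⟨s, ⟨hs0, hout⟩, rfl⟩
  refine ENNReal.ofReal_le_ofReal (le_of_not_ge fun hst => hout ?_)
  exact hx ⟨hs0, hst⟩

theorem exitTime_le_liminf {ι : Type*} {p : Filter ι} {xk : ι → ℝ → ℝ}
    (hx : ContinuousOn x (Ici 0))
    (hconv : ∀ T : ℝ, 0 < T → TendstoUniformlyOn xk x p (Icc 0 T)) :
    exitTime a b x ≤ liminf (fun k => exitTime a b (xk k)) p := by
  refine le_of_forall_lt fun c hc => ?_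
  obtain ⟨t, ht0, hct, htx⟩ := ENNReal.lt_iff_exists_real_btwn.mp hc
  have hconv_t : TendstoUniformlyOn xk x p (Icc 0 t) :=
    (hconv (t + 1) (by linarith)).mono (Icc_subset_Icc_right (by linarith))
  have hstay : ∀ᶠ k in p, MapsTo (xk k) (Icc 0 t) (Ioo a b) :=
    hconv_t.eventually_mapsTo isCompact_Icc (hx.mono Icc_subset_Ici_self) isOpen_Ioo
      (mapsTo_Icc_of_ofReal_lt_exitTime htx)
  refine hct.trans_le (le_liminf_of_le (by isBoundedDefault) ?_)
  filter_upwards [hstay] with k hk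
  exact ofReal_le_exitTime_of_mapsTo_Icc hk

end exitTime

theorem stmt18_general (ln rn : ℕ → ℝ)
    (x : ℝ → ℝ) (xk : ℕ → ℝ → ℝ)
    (hxc : Continuous x)
    (hconv : ∀ T : ℝ, 0 < T → TendstoUniformlyOn xk x atTop (Icc 0 T)) :
    (⨆ n : ℕ, exitTime (ln n) (rn n) x) ≤
      liminf (fun k => ⨆ n : ℕ, exitTime (ln n) (rn n) (xk k)) atTop := by
  refine iSup_le fun n => (exitTime_le_liminf hxc.continuousOn hconv).trans ?_
  exact liminf_le_liminf (.of_forall fun k => le_iSup (fun m => exitTime (ln m) (rn m) (xk k)) n)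

/-- Lower semicontinuity of the explosion time `S(x) = lim_n S_n(x) = sup_n S_n(x)`
under locally uniform convergence: if the continuous `I`-valued paths `xₖ` converge
to `x` uniformly on compacts, then `S(x) ≤ liminf_k S(xₖ)`. -/
theorem stmt18 (ℓ r : ℝ) (hlr : ℓ < r) (ln rn : ℕ → ℝ)
    (hlnanti : StrictAnti ln) (hrnmono : StrictMono rn)
    (hbounds : ∀ n : ℕ, ℓ < ln n ∧ ln n < rn n ∧ rn n < r)
    (hllim : Tendsto ln atTop (𝓝 ℓ)) (hrlim : Tendsto rn atTop (𝓝 r))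
    (x : ℝ → ℝ) (xk : ℕ → ℝ → ℝ)
    (hxc : Continuous x) (hxkc : ∀ k : ℕ, Continuous (xk k))
    (hxmem : ∀ t : ℝ, 0 ≤ t → x t ∈ Ioo ℓ r)
    (hxkmem : ∀ k : ℕ, ∀ t : ℝ, 0 ≤ t → xk k t ∈ Ioo ℓ r)
    (hconv : ∀ T : ℝ, 0 < T → TendstoUniformlyOn xk x atTop (Icc 0 T)) :
    (⨆ n : ℕ, exitTime (ln n) (rn n) x) ≤
      liminf (fun k => ⨆ n : ℕ, exitTime (ln n) (rn n) (xk k)) atTop :=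
  stmt18_general ln rn x xk hxc hconv
end
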